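/- Take N = 4 and the word u = [0,1,2,3] of the four distinct colors of Fin 4. Then in H, Σ_{T ∈ RT_u^0} (−1)^{v(T)} Λ_↙(T) ≠ Σ_{T ∈ RT_u^0} (−1)^{v(T)} Λ_↘(T); that is, the left Lagrange antipode S_L and the right Lagrange antipode S_R take different values on the generator Y_u^0, so for more than one variable the left and right Lagrange antipodes (hence the left and right substitutional inverses of power series) are in general distinct. -/

import Mathlib

open scoped TensorProduct

/-- The generator set `G = {(i,u) : i ∈ Fin N, u a word over Fin N of length ≥ 2}`. -/
abbrev Gen (N : ℕ) : Type := { p : Fin N × List (Fin N) // 2 ≤ p.2.length }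

/-- The free unital associative `k`-algebra on `Gen N`. -/
abbrev H (N : ℕ) (k : Type) [Field k] : Type := FreeAlgebra k (Gen N)

/-- `Y N k i u` is the generator `Y_u^i` when `|u| ≥ 2`, and for a one-letter word
`[j]` it is `1` if `i = j` and `0` otherwise (and `0` for the empty word). -/
noncomputable def Y (N : ℕ) (k : Type) [Field k] (i : Fin N) (u : List (Fin N)) : H N k :=
  if h : 2 ≤ u.length then FreeAlgebra.ι k (⟨(i, u), h⟩ : Gen N)
  else if u = [i] then 1 else 0

/-- `N`-colored planar trees: a single-vertex tree with a color, or a root with a color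
and an ordered list of offspring subtrees. -/
inductive PTree (N : ℕ) : Type
  | leaf : Fin N → PTree N
  | node : Fin N → List (PTree N) → PTree N

namespace PTree

/-- The color of the root. -/
def rootColor {N : ℕ} : PTree N → Fin N
  | leaf i => i
  | node i _ => i

/-- The number of non-leaf vertices: `v(single-vertex) = 0` and
`v(c(i;T₁,…,T_n)) = 1 + Σ_k v(T_k)`. -/
def vcount {N : ℕ} : PTree N → ℕ
  | leaf _ => 0
  | node _ ts => 1 + (ts.attach.map (fun t => vcount t.1)).sum
decreasing_by
  have := List.sizeOf_lt_of_mem t.2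
  simp only [PTree.node.sizeOf_spec]
  omega

end PTree

/-- `IsRT i u T` asserts `T ∈ RT_u^i`: `T` is a reduced `N`-colored planar tree with root
color `i` and leaf word `u`.  For `|u| = 1` the only member is the single-vertex tree when
`u = [i]`; otherwise the members are the trees `c(i; T₁,…,T_n)` with `n ≥ 2`,
`u = u₁ ⋯ u_n`, and `T_k ∈ RT_{u_k}^{i_k}` where `i_k` is the root color of `T_k`. -/
inductive IsRT {N : ℕ} : Fin N → List (Fin N) → PTree N → Prop
  | leaf (i : Fin N) : IsRT i [i] (PTree.leaf i)
  | node (i : Fin N) (ts : List (PTree N)) (us : List (List (Fin N)))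
      (h2 : 2 ≤ ts.length)
      (hall : List.Forall₂ (fun (t : PTree N) (u : List (Fin N)) => IsRT t.rootColor u t) ts us) :
      IsRT i us.flatten (PTree.node i ts)

/-- `Λ_↙`: the product of the generators attached to the non-leaf vertices in descending
left depth-first order: `Λ_↙(c(i;T₁,…,T_n)) = Y(root) · Λ_↙(T_n) ⋯ Λ_↙(T₁)`. -/
noncomputable def lamL (N : ℕ) (k : Type) [Field k] : PTree N → H N k
  | PTree.leaf _ => 1
  | PTree.node i ts =>
      Y N k i (ts.map PTree.rootColor) * ((ts.attach.map (fun t => lamL N k t.1)).reverse).prod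
decreasing_by
  have := List.sizeOf_lt_of_mem t.2
  simp only [PTree.node.sizeOf_spec]
  omega

/-- `Λ_↘`: the product of the generators attached to the non-leaf vertices in descending
right depth-first order: `Λ_↘(c(i;T₁,…,T_n)) = Y(root) · Λ_↘(T₁) ⋯ Λ_↘(T_n)`. -/
noncomputable def lamDn (N : ℕ) (k : Type) [Field k] : PTree N → H N k
  | PTree.leaf _ => 1
  | PTree.node i ts =>
      Y N k i (ts.map PTree.rootColor) * (ts.attach.map (fun t => lamDn N k t.1)).prod
decreasing_by
  have := List.sizeOf_lt_of_mem t.2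
  simp only [PTree.node.sizeOf_spec]
  omega

/-! ### Auxiliary material -/

namespace PTree

mutual
def beq {N : ℕ} : PTree N → PTree N → Bool
  | .leaf i, .leaf j => i == j
  | .node i ts, .node j us => i == j && beqList ts us
  | _, _ => false
def beqList {N : ℕ} : List (PTree N) → List (PTree N) → Bool
  | [], [] => true
  | t :: ts, u :: us => beq t u && beqList ts us
  | _, _ => false
end

mutual
theorem beq_iff {N : ℕ} : ∀ a b : PTree N, beq a b = true ↔ a = b
  | .leaf i, .leaf j => by simp [beq]
  | .node i ts, .node j us => by simp [beq, beq_iff_list ts us]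
  | .leaf _, .node _ _ => by simp [beq]
  | .node _ _, .leaf _ => by simp [beq]
theorem beq_iff_list {N : ℕ} : ∀ a b : List (PTree N), beqList a b = true ↔ a = b
  | [], [] => by simp [beqList]
  | t :: ts, u :: us => by simp [beqList, beq_iff t u, beq_iff_list ts us]
  | [], _ :: _ => by simp [beqList]
  | _ :: _, [] => by simp [beqList]
end

instance {N : ℕ} : DecidableEq (PTree N) := fun a b => decidable_of_iff _ (beq_iff a b)

-- Structurally-recursive word of a tree in descending left depth-first order.
mutual
def wl {N : ℕ} : PTree N → List (Fin N × List (Fin N))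
  | .leaf _ => []
  | .node i ts => (i, ts.map rootColor) :: wll ts
def wll {N : ℕ} : List (PTree N) → List (Fin N × List (Fin N))
  | [] => []
  | t :: ts => wll ts ++ wl t
end

-- Structurally-recursive word of a tree in descending right depth-first order.
mutual
def wr {N : ℕ} : PTree N → List (Fin N × List (Fin N))
  | .leaf _ => []
  | .node i ts => (i, ts.map rootColor) :: wrl ts
def wrl {N : ℕ} : List (PTree N) → List (Fin N × List (Fin N))
  | [] => []
  | t :: ts => wr t ++ wrl ts
end

end PTree

/-! ### Enumeration of reduced trees -/

mutual
def treesF (N : ℕ) : ℕ → Fin N → List (Fin N) → List (PTree N)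
  | 0, _, _ => []
  | fuel+1, i, u =>
    if u.length ≤ 1 then (if u = [i] then [PTree.leaf i] else [])
    else (forests2F N fuel u).map (PTree.node i)

def forests2F (N : ℕ) : ℕ → List (Fin N) → List (List (PTree N))
  | 0, _ => []
  | fuel+1, u =>
    (List.range (u.length - 1)).flatMap (fun m' =>
      ((List.finRange N).flatMap (fun j => treesF N fuel j (u.take (m'+1)))).flatMap (fun t =>
        (((List.finRange N).flatMap (fun j => treesF N fuel j (u.drop (m'+1)))).map
            (fun t' => [t, t'])) ++
        (forests2F N fuel (u.drop (m'+1))).map (fun ts => t :: ts)))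
end

theorem rootColor_of_mem_treesF {N : ℕ} {fuel : ℕ} {i : Fin N} {u : List (Fin N)} {T : PTree N}
    (h : T ∈ treesF N fuel i u) : T.rootColor = i := by
  match fuel with
  | 0 => simp [treesF] at h
  | fuel+1 =>
    rw [treesF] at h
    split at h
    · split at h
      · simp at h; subst h; rfl
      · simp at h
    · simp only [List.mem_map] at h
      obtain ⟨ts, -, rfl⟩ := h
      rfl
theorem sound {N : ℕ} : ∀ fuel : ℕ,
    (∀ i u (T : PTree N), T ∈ treesF N fuel i u → IsRT i u T) ∧
    (∀ u (ts : List (PTree N)), ts ∈ forests2F N fuel u → 2 ≤ ts.length ∧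
      ∃ us : List (List (Fin N)), us.flatten = u ∧
        List.Forall₂ (fun t v => IsRT t.rootColor v t) ts us) := by
  intro fuel
  induction fuel with
  | zero =>
    constructor
    · intro _ _ _ h; simp [treesF] at h
    · intro _ _ h; simp [forests2F] at h
  | succ fuel ih =>
    constructor
    · intro i u T h
      rw [treesF] at h
      split at h
      · split at h
        · simp at h; subst h
          rename_i hu; subst hu
          exact IsRT.leaf i
        · simp at h
      · simp only [List.mem_map] at h
        obtain ⟨ts, hts, rfl⟩ := h
        obtain ⟨h2, us, rfl, hall⟩ := ih.2 u ts hts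
        exact IsRT.node i ts us h2 hall
    · intro u ts h
      rw [forests2F] at h
      simp only [List.mem_flatMap, List.mem_range, List.mem_append, List.mem_map] at h
      obtain ⟨m', hm', t, ht, hcase⟩ := h
      obtain ⟨j, -, htj⟩ := ht
      have hroot : IsRT t.rootColor (u.take (m'+1)) t := by
        rw [rootColor_of_mem_treesF htj]; exact ih.1 _ _ _ htj
      rcases hcase with ⟨t', ht', rfl⟩ | ⟨ts', hts', rfl⟩
      · obtain ⟨j', -, htj'⟩ := ht'
        have hroot' : IsRT t'.rootColor (u.drop (m'+1)) t' := by
          rw [rootColor_of_mem_treesF htj']; exact ih.1 _ _ _ htj'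
        refine ⟨by simp, [u.take (m'+1), u.drop (m'+1)], by simp, ?_⟩
        exact List.Forall₂.cons hroot (List.Forall₂.cons hroot' List.Forall₂.nil)
      · obtain ⟨h2, us, hflat, hall⟩ := ih.2 _ _ hts'
        refine ⟨by simp; omega, u.take (m'+1) :: us, ?_, List.Forall₂.cons hroot hall⟩
        simp [hflat]

theorem word_ne_nil_aux {N : ℕ} : ∀ n (T : PTree N), sizeOf T ≤ n → ∀ (i : Fin N) u, IsRT i u T → u ≠ [] := by
  intro n
  induction n with
  | zero =>
    intro T hT
    cases T <;> simp only [PTree.leaf.sizeOf_spec, PTree.node.sizeOf_spec] at hT <;> omega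
  | succ n ih =>
    intro T hT i u h
    cases h with
    | leaf => simp
    | node j ts us h2 hall =>
      cases hall with
      | nil => simp at h2
      | @cons t1 u1 ts' us' h1 hrest =>
        have hsz : sizeOf t1 ≤ n := by
          simp only [PTree.node.sizeOf_spec, List.cons.sizeOf_spec] at hT
          omega
        have hu1 := ih t1 hsz _ _ h1
        simp only [List.flatten_cons, ne_eq]
        exact fun hc => hu1 (List.append_eq_nil_iff.mp hc).1

theorem word_ne_nil {N : ℕ} (T : PTree N) (i : Fin N) (u : List (Fin N)) (h : IsRT i u T) :
    u ≠ [] := word_ne_nil_aux (sizeOf T) T le_rfl i u h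

theorem words_ne_nil {N : ℕ} {ts : List (PTree N)} {us : List (List (Fin N))}
    (hall : List.Forall₂ (fun t v => IsRT t.rootColor v t) ts us) : ∀ v ∈ us, v ≠ [] := by
  induction hall with
  | nil => simp
  | @cons t u ts' us' h1 hrest ih =>
    intro v hv
    rcases List.mem_cons.mp hv with rfl | hv
    · exact word_ne_nil t _ _ h1
    · exact ih v hv

theorem len_le_flatten_len {α : Type*} : ∀ us : List (List α), (∀ v ∈ us, v ≠ []) →
    us.length ≤ us.flatten.length
  | [], _ => by simp
  | v :: us, h => by
    have h1 : 1 ≤ v.length := by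
      have := h v (by simp)
      cases v with
      | nil => simp at this
      | cons a l => simp
    have := len_le_flatten_len us (fun w hw => h w (by simp [hw]))
    simp only [List.flatten_cons, List.length_cons, List.length_append]
    omega

theorem comp_aux {N : ℕ} : ∀ n : ℕ,
    (∀ (T : PTree N), sizeOf T ≤ n → ∀ (i : Fin N) u, IsRT i u T →
      ∀ fuel : ℕ, 2 * u.length ≤ fuel → T ∈ treesF N fuel i u) ∧
    (∀ (ts : List (PTree N)), sizeOf ts ≤ n →
      ∀ us : List (List (Fin N)), List.Forall₂ (fun t v => IsRT t.rootColor v t) ts us →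
      2 ≤ ts.length → ∀ fuel : ℕ, 2 * us.flatten.length - 1 ≤ fuel →
      ts ∈ forests2F N fuel us.flatten) := by
  intro n
  induction n with
  | zero =>
    constructor
    · intro T hT
      cases T <;> simp only [PTree.leaf.sizeOf_spec, PTree.node.sizeOf_spec] at hT <;> omega
    · intro ts hts us hall h2
      cases ts with
      | nil => simp at h2
      | cons a l => simp only [List.cons.sizeOf_spec] at hts; omega
  | succ n ih =>
    constructor
    · intro T hT i u h fuel hfuel
      cases h with
      | leaf =>
        obtain ⟨f, rfl⟩ : ∃ f, fuel = f + 1 := ⟨fuel - 1, by simp at hfuel; omega⟩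
        rw [treesF]
        simp
      | node j ts us h2 hall =>
        have hlen2 : 2 ≤ us.flatten.length := by
          have := len_le_flatten_len us (words_ne_nil hall)
          have := hall.length_eq
          omega
        obtain ⟨f, rfl⟩ : ∃ f, fuel = f + 1 := ⟨fuel - 1, by omega⟩
        rw [treesF, if_neg (by omega)]
        simp only [List.mem_map]
        have hts : sizeOf ts ≤ n := by
          simp only [PTree.node.sizeOf_spec] at hT
          omega
        exact ⟨ts, ih.2 ts hts us hall h2 f (by omega), rfl⟩
    · intro ts hts us hall h2 fuel hfuel
      cases hall with
      | nil => simp at h2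
      | @cons t1 u1 ts1 us1 h1 hrest =>
        cases hrest with
        | nil => simp at h2
        | @cons t2 u2 ts2 us2 h2' hrest2 =>
          have hsz : sizeOf t1 ≤ n ∧ sizeOf t2 ≤ n ∧ sizeOf (t2 :: ts2) ≤ n := by
            simp only [List.cons.sizeOf_spec] at hts ⊢
            omega
          have hu1 : 1 ≤ u1.length := by
            have := word_ne_nil t1 _ _ h1
            cases u1 with | nil => simp at this | cons a l => simp
          have hu2 : 1 ≤ u2.length := by
            have := word_ne_nil t2 _ _ h2'
            cases u2 with | nil => simp at this | cons a l => simp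
          have hflat : ((u1 :: u2 :: us2).flatten) = u1 ++ (u2 :: us2).flatten := by
            simp
          have hrlen : 1 ≤ (u2 :: us2).flatten.length := by
            simp only [List.flatten_cons, List.length_append]; omega
          have htot : (u1 :: u2 :: us2).flatten.length
              = u1.length + (u2 :: us2).flatten.length := by
            simp
          obtain ⟨f, rfl⟩ : ∃ f, fuel = f + 1 := ⟨fuel - 1, by omega⟩
          rw [forests2F]
          simp only [List.mem_flatMap, List.mem_range, List.mem_append, List.mem_map]
          have hm : u1.length - 1 + 1 = u1.length := by omega
          refine ⟨u1.length - 1, by omega, t1, ?_, ?_⟩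
          · rw [hm, hflat, List.take_left]
            exact ⟨t1.rootColor, List.mem_finRange _, ih.1 t1 hsz.1 _ _ h1 f (by omega)⟩
          · rw [hm, hflat, List.drop_left]
            cases hrest2 with
            | nil =>
              left
              refine ⟨t2, ⟨t2.rootColor, List.mem_finRange _, ?_⟩, rfl⟩
              have hfl : (u2 :: ([] : List (List (Fin N)))).flatten = u2 := by simp
              have hlen2 : ([u1, u2] : List (List (Fin N))).flatten.length
                  = u1.length + u2.length := by simp
              rw [hfl]
              exact ih.1 t2 hsz.2.1 _ _ h2' f (by omega)
            | @cons t3 u3 ts3 us3 h3 hrest3 =>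
              right
              refine ⟨t2 :: t3 :: ts3, ?_, rfl⟩
              exact ih.2 (t2 :: t3 :: ts3) hsz.2.2 (u2 :: u3 :: us3)
                (List.Forall₂.cons h2' (List.Forall₂.cons h3 hrest3)) (by simp) f (by omega)

theorem compT {N : ℕ} (T : PTree N) (i : Fin N) (u : List (Fin N)) (h : IsRT i u T)
    (fuel : ℕ) (hfuel : 2 * u.length ≤ fuel) : T ∈ treesF N fuel i u :=
  (comp_aux (sizeOf T)).1 T le_rfl i u h fuel hfuel

/-! ### Monomials -/

noncomputable def monom (N : ℕ) (k : Type) [Field k] (l : List (Fin N × List (Fin N))) :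
    H N k :=
  (l.map (fun p => Y N k p.1 p.2)).prod

theorem monom_nil (N : ℕ) (k : Type) [Field k] : monom N k [] = 1 := rfl

theorem monom_cons (N : ℕ) (k : Type) [Field k] (p : Fin N × List (Fin N))
    (l : List (Fin N × List (Fin N))) :
    monom N k (p :: l) = Y N k p.1 p.2 * monom N k l := by
  simp [monom]

theorem monom_append (N : ℕ) (k : Type) [Field k] (a b : List (Fin N × List (Fin N))) :
    monom N k (a ++ b) = monom N k a * monom N k b := by
  simp [monom]

theorem lam_eq_aux (N : ℕ) (k : Type) [Field k] : ∀ n : ℕ,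
    (∀ T : PTree N, sizeOf T ≤ n →
      lamL N k T = monom N k (PTree.wl T) ∧ lamDn N k T = monom N k (PTree.wr T)) ∧
    (∀ ts : List (PTree N), sizeOf ts ≤ n →
      ((ts.map (lamL N k)).reverse).prod = monom N k (PTree.wll ts) ∧
      (ts.map (lamDn N k)).prod = monom N k (PTree.wrl ts)) := by
  intro n
  induction n with
  | zero =>
    constructor
    · intro T hT
      cases T <;> simp only [PTree.leaf.sizeOf_spec, PTree.node.sizeOf_spec] at hT <;> omega
    · intro ts hts
      cases ts <;> simp only [List.nil.sizeOf_spec, List.cons.sizeOf_spec] at hts <;> omega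
  | succ n ih =>
    constructor
    · intro T hT
      cases T with
      | leaf i => rw [lamL, lamDn, PTree.wl, PTree.wr]; exact ⟨rfl, rfl⟩
      | node i ts =>
        have hts : sizeOf ts ≤ n := by
          simp only [PTree.node.sizeOf_spec] at hT; omega
        obtain ⟨hL, hR⟩ := ih.2 ts hts
        constructor
        · rw [lamL, PTree.wl, monom_cons, List.attach_map_val (l := ts) (f := lamL N k), hL]
        · rw [lamDn, PTree.wr, monom_cons, List.attach_map_val (l := ts) (f := lamDn N k), hR]
    · intro ts hts
      cases ts with
      | nil => rw [PTree.wll, PTree.wrl]; exact ⟨rfl, rfl⟩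
      | cons t ts' =>
        have hsz : sizeOf t ≤ n ∧ sizeOf ts' ≤ n := by
          simp only [List.cons.sizeOf_spec] at hts; omega
        obtain ⟨htL, htR⟩ := ih.1 t hsz.1
        obtain ⟨hL, hR⟩ := ih.2 ts' hsz.2
        constructor
        · rw [PTree.wll, monom_append, List.map_cons, List.reverse_cons, List.prod_append,
            List.prod_cons, List.prod_nil, mul_one, hL, htL]
        · rw [PTree.wrl, monom_append, List.map_cons, List.prod_cons, hR, htR]

theorem lamL_eq_monom (N : ℕ) (k : Type) [Field k] (T : PTree N) :
    lamL N k T = monom N k (PTree.wl T) :=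
  ((lam_eq_aux N k (sizeOf T)).1 T le_rfl).1

theorem lamDn_eq_monom (N : ℕ) (k : Type) [Field k] (T : PTree N) :
    lamDn N k T = monom N k (PTree.wr T) :=
  ((lam_eq_aux N k (sizeOf T)).1 T le_rfl).2

/-! ### The coefficient-extraction homomorphism -/

noncomputable def psi (N : ℕ) (k : Type) [Field k] :
    H N k →ₐ[k] MonoidAlgebra k (FreeMonoid (Fin N × List (Fin N))) :=
  FreeAlgebra.lift k
    (fun g : Gen N => MonoidAlgebra.single (FreeMonoid.of g.1) (1 : k))

theorem psi_Y (N : ℕ) (k : Type) [Field k] (i : Fin N) (u : List (Fin N))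
    (h : 2 ≤ u.length) :
    psi N k (Y N k i u) = MonoidAlgebra.single (FreeMonoid.of (i, u)) (1 : k) := by
  rw [Y, dif_pos h, psi, FreeAlgebra.lift_ι_apply]

theorem psi_monom (N : ℕ) (k : Type) [Field k] :
    ∀ l : List (Fin N × List (Fin N)), (∀ p ∈ l, 2 ≤ p.2.length) →
      psi N k (monom N k l) = MonoidAlgebra.single (FreeMonoid.ofList l) (1 : k)
  | [], _ => by
    rw [monom_nil, map_one, FreeMonoid.ofList_nil, MonoidAlgebra.one_def]
  | p :: l, h => by
    rw [monom_cons, map_mul, psi_Y N k p.1 p.2 (h p (by simp)),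
      psi_monom N k l (fun q hq => h q (by simp [hq])), MonoidAlgebra.single_mul_single,
      one_mul, FreeMonoid.ofList_cons]

/-! ### The explicit data for `N = 4`, `u = [0,1,2,3]` -/

def Ltrees : List (PTree 4) := treesF 4 8 0 [0, 1, 2, 3]

def tgtWord : List (Fin 4 × List (Fin 4)) := [(0, [0, 0]), (0, [2, 3]), (0, [0, 1])]

def theTree : PTree 4 :=
  PTree.node 0 [PTree.node 0 [PTree.leaf 0, PTree.leaf 1],
    PTree.node 0 [PTree.leaf 2, PTree.leaf 3]]

theorem set_eq : {T : PTree 4 | IsRT 0 [0, 1, 2, 3] T} = ↑Ltrees.toFinset := by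
  ext T
  simp only [Set.mem_setOf_eq, Finset.coe_sort_coe, List.coe_toFinset, List.mem_toFinset,
    Finset.mem_coe]
  constructor
  · intro h
    exact compT T 0 [0, 1, 2, 3] h 8 (by norm_num)
  · intro h
    exact (sound 8).1 0 [0, 1, 2, 3] T h

theorem key_sum (k : Type) [Field k] (lam : PTree 4 → H 4 k)
    (w : PTree 4 → List (Fin 4 × List (Fin 4)))
    (hlam : ∀ T ∈ Ltrees.toFinset, lam T = monom 4 k (w T))
    (hlen : ∀ T ∈ Ltrees.toFinset, ∀ p ∈ w T, 2 ≤ p.2.length) :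
    (psi 4 k (∑ T ∈ Ltrees.toFinset, ((-1 : H 4 k) ^ T.vcount) * lam T)).coeff
        (FreeMonoid.ofList tgtWord)
      = ∑ T ∈ Ltrees.toFinset.filter (fun T => w T = tgtWord), (-1 : k) ^ T.vcount := by
  classical
  rw [map_sum, MonoidAlgebra.coeff_sum, Finset.sum_apply', Finset.sum_filter]
  refine Finset.sum_congr rfl (fun T hT => ?_)
  rw [hlam T hT, map_mul, map_pow, map_neg, map_one,
    psi_monom 4 k (w T) (hlen T hT)]
  rw [← map_one (algebraMap k (MonoidAlgebra k (FreeMonoid (Fin 4 × List (Fin 4))))),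
    ← map_neg, ← map_pow, ← Algebra.smul_def]
  rw [MonoidAlgebra.coeff_smul, Finsupp.smul_apply, MonoidAlgebra.coeff_single, Finsupp.single_apply]
  by_cases hw : w T = tgtWord
  · simp [hw]
  · rw [if_neg (fun hc => hw (FreeMonoid.ofList.injective hc)), if_neg hw, smul_zero]

set_option maxRecDepth 100000 in
theorem filter_wl :
    Ltrees.toFinset.filter (fun T => PTree.wl T = tgtWord) = {theTree} := by decide

set_option maxRecDepth 100000 in
theorem filter_wr :
    Ltrees.toFinset.filter (fun T => PTree.wr T = tgtWord) = ∅ := by decide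

set_option maxRecDepth 100000 in
set_option maxHeartbeats 2000000 in
theorem len_ok_wl : ∀ T ∈ Ltrees.toFinset, ∀ p ∈ PTree.wl T, 2 ≤ p.2.length := by decide

set_option maxRecDepth 100000 in
set_option maxHeartbeats 2000000 in
theorem len_ok_wr : ∀ T ∈ Ltrees.toFinset, ∀ p ∈ PTree.wr T, 2 ≤ p.2.length := by decide

/-- for `N = 4` and the word `u = [0,1,2,3]` of the four distinct colors,
the values `Σ_{T ∈ RT_u^0} (−1)^{v(T)} Λ_↙(T)` and `Σ_{T ∈ RT_u^0} (−1)^{v(T)} Λ_↘(T)` of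
the left and right Lagrange antipodes on the generator `Y_u^0` are different. -/
theorem left_ne_right_Lagrange_antipode (k : Type) [Field k] :
    (∑ᶠ T ∈ {T : PTree 4 | IsRT 0 [0, 1, 2, 3] T}, ((-1 : H 4 k) ^ T.vcount) * lamL 4 k T)
      ≠ ∑ᶠ T ∈ {T : PTree 4 | IsRT 0 [0, 1, 2, 3] T}, ((-1 : H 4 k) ^ T.vcount) * lamDn 4 k T := by
  rw [set_eq, finsum_mem_coe_finset, finsum_mem_coe_finset]
  intro hEq
  have h1 := key_sum k (lamL 4 k) PTree.wl (fun T _ => lamL_eq_monom 4 k T) len_ok_wl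
  have h2 := key_sum k (lamDn 4 k) PTree.wr (fun T _ => lamDn_eq_monom 4 k T) len_ok_wr
  rw [hEq, h2, filter_wr, Finset.sum_empty, filter_wl, Finset.sum_singleton] at h1
  exact pow_ne_zero _ (neg_ne_zero.mpr (one_ne_zero (α := k))) h1.symm
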